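/- arXiv:2103.15026 — 6 statements merged into one kernel-verified Lean document; each statement's English description precedes it below -/
import Mathlib

section
/- Let R be an algebraically closed field of characteristic p ≥ 0 and let σ ∈ Σ_n have cycle type λ = (λ_1,…,λ_s) with p ∤ λ_i for all 1 ≤ i ≤ s. For 1 ≤ j ≤ s let V_j be the set of λ_j-th roots of unity in R, and for 1 ≤ i ≤ s let h_i(σ) be the number of elements of V_1 ∪ … ∪ V_s that belong to exactly i of the sets V_1,…,V_s. Then there is a ring isomorphism S_n(σ,R) ≅ R^{h_1(σ)} × M_2(R)^{h_2(σ)} × ⋯ × M_s(R)^{h_s(σ)}, where M_i(R)^{h_i(σ)} denotes the direct product of h_i(σ) copies of the matrix ring M_i(R). -/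
/-!
The permutation matrix `c_σ` has `S_n(σ,R)` as its centralizer, and relabelling `Fin n` along
the cycles of `σ` turns it into the block rotation `⊕ⱼ c_{λⱼ}`. Since `p ∤ λⱼ`, the cyclic
shift `c_{λⱼ}` is diagonalised by the Fourier matrix `(ζ ^ x)` indexed by `x < λⱼ` and the
`λⱼ`-th roots of unity `ζ`, each root of unity occurring once as an eigenvalue. So `c_σ` is
conjugate to a diagonal matrix in which `ζ ∈ V_1 ∪ ⋯ ∪ V_s` occurs once for each `V_j`
containing it, and the centralizer of that diagonal matrix is the product, over the distinct
eigenvalues `ζ`, of full matrix rings of size the multiplicity of `ζ`. Grouping the eigenvalues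
by multiplicity gives the factors `M_i(R)^{h_i}`.
-/

open Matrix

/-- The `σ`-invariant matrix ring `S_n(σ,R) = {a ∈ M_n(R) | a_{ij} = a_{σ(i)σ(j)}}`. -/
def invariantSubring (R : Type*) [Ring R] {n : ℕ} (σ : Equiv.Perm (Fin n)) :
    Subring (Matrix (Fin n) (Fin n) R) where
  carrier := {a | ∀ i j, a i j = a (σ i) (σ j)}
  zero_mem' := fun i j => rfl
  one_mem' := fun i j => by
    simp [Matrix.one_apply, EmbeddingLike.apply_eq_iff_eq]
  add_mem' := fun {a b} ha hb i j => by
    simp only [Matrix.add_apply]; rw [ha i j, hb i j]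
  neg_mem' := fun {a} ha i j => by
    simp only [Matrix.neg_apply]; rw [ha i j]
  mul_mem' := fun {a b} ha hb i j => by
    simp only [Matrix.mul_apply]
    calc ∑ k, a i k * b k j
        = ∑ k, a (σ i) (σ k) * b (σ k) (σ j) :=
          Finset.sum_congr rfl fun k _ => by rw [← ha, ← hb]
      _ = ∑ k, a (σ i) k * b k (σ j) := Equiv.sum_comp σ fun k => a (σ i) k * b k (σ j)

/-- `σ ∈ Σ_n` has cycle type `(lam 0, …, lam (s-1))`, where fixed points are counted
as parts equal to `1`: the multiset of lengths of the disjoint cycles of `σ`, together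
with one part `1` for each fixed point, is the multiset of values of `lam`. -/
def HasFullCycleType {n s : ℕ} (σ : Equiv.Perm (Fin n)) (lam : Fin s → ℕ) : Prop :=
  σ.cycleType + Multiset.replicate (n - σ.cycleType.sum) 1 = (List.ofFn lam : Multiset ℕ)

/-- With `V_j` the set of `λ_j`-th roots of unity in `R`, `hCount R lam i` is the number
`h_i` of elements of `V_1 ∪ … ∪ V_s` that belong to exactly `i` of the sets `V_1,…,V_s`. -/
noncomputable def hCount (R : Type*) [Field R] {s : ℕ} (lam : Fin s → ℕ) (i : ℕ) : ℕ :=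
  Set.ncard {x : R | (∃ j, x ^ lam j = 1) ∧ Set.ncard {j : Fin s | x ^ lam j = 1} = i}

open Equiv Function Polynomial

theorem Multiset.sum_map_filter_singleton {α : Type*} (p : α → Prop) [DecidablePred p]
    (s : Multiset α) : (s.map fun a => ({a} : Multiset α).filter p).sum = s.filter p := by
  induction s using Multiset.induction_on with
  | empty => simp
  | cons a s ih =>
    rw [Multiset.map_cons, Multiset.sum_cons, ih, ← Multiset.filter_add, Multiset.singleton_add]

def Finset.sigmaEquivSigmaBiUnion {ι α : Type*} [Fintype ι] [DecidableEq α]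
    (S : ι → Finset α) : (Σ i, S i) ≃ Σ a : Finset.univ.biUnion S, {i // (a : α) ∈ S i} where
  toFun x := ⟨⟨x.2, Finset.mem_biUnion.2 ⟨x.1, Finset.mem_univ _, x.2.2⟩⟩, ⟨x.1, x.2.2⟩⟩
  invFun y := ⟨y.2, ⟨y.1, y.2.2⟩⟩
  left_inv _ := rfl
  right_inv _ := rfl

def RingEquiv.piCurry {ι : Type*} {κ : ι → Type*} (S : ∀ i, κ i → Type*)
    [∀ i k, NonUnitalNonAssocSemiring (S i k)] :
    (∀ x : Σ i, κ i, S x.1 x.2) ≃+* ∀ i k, S i k where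
  toEquiv := Equiv.piCurry S
  map_mul' _ _ := rfl
  map_add' _ _ := rfl

def RingEquiv.centralizerCongr {A B : Type*} [Ring A] [Ring B] (f : A ≃+* B) {a : A} {b : B}
    (h : f a = b) : Subring.centralizer {a} ≃+* Subring.centralizer {b} :=
  f.restrict _ _ fun x => by
    subst h
    simp only [Subring.mem_centralizer_iff, Set.mem_singleton_iff, forall_eq, ← map_mul,
      f.injective.eq_iff]

namespace Equiv.Perm

section Sigma

variable {ι : Type*} [DecidableEq ι] {β : ι → Type*}

theorem sigmaCongrRight_mulSingle (a : ι) (g : Perm (β a)) :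
    sigmaCongrRight (Pi.mulSingle a g) = g.extendDomain (sigmaSubtype a).symm := by
  ext1 ⟨b, y⟩
  obtain rfl | hb := eq_or_ne b a
  · rw [extendDomain_apply_subtype g _ (p := fun x : Sigma β => x.1 = b) rfl]
    simp [sigmaSubtype]
  · rw [extendDomain_apply_not_subtype g _ (p := fun x : Sigma β => x.1 = a) hb]
    simp [hb]

variable [Fintype ι] [∀ a, Fintype (β a)] [∀ a, DecidableEq (β a)]

theorem cycleType_sigmaCongrRight (f : ∀ a, Perm (β a)) :
    (sigmaCongrRight f).cycleType = ∑ a, (f a).cycleType := by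
  have disjoint : ((Finset.univ : Finset ι) : Set ι).Pairwise fun a b =>
      Disjoint (sigmaCongrRightHom β (Pi.mulSingle a (f a)))
        (sigmaCongrRightHom β (Pi.mulSingle b (f b))) := by
    intro a _ b _ hab ⟨c, y⟩
    by_cases hc : c = a
    · subst hc
      right
      simp [Pi.mulSingle_eq_of_ne hab]
    · left
      simp [Pi.mulSingle_eq_of_ne hc]
  have prod := Finset.map_noncommProd Finset.univ (fun a => Pi.mulSingle a (f a))
    (fun i _ j _ _ => Pi.mulSingle_apply_commute f i j) (sigmaCongrRightHom β)
  rw [Finset.noncommProd_mulSingle] at prod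
  rw [← sigmaCongrRightHom_apply, prod, Disjoint.cycleType_noncommProd disjoint]
  simp [sigmaCongrRight_mulSingle]

end Sigma

theorem cycleType_finRotate_eq_filter (m : ℕ) :
    (finRotate m).cycleType = ({m} : Multiset ℕ).filter (2 ≤ ·) := by
  rw [Multiset.filter_singleton]
  split_ifs with hm
  · exact cycleType_finRotate_of_le hm
  · interval_cases m <;> exact cycleType_one

theorem cycleType_permCongr {α β : Type*} [Fintype α] [DecidableEq α] [Fintype β]
    [DecidableEq β] (e : α ≃ β) (f : Perm α) : (e.permCongr f).cycleType = f.cycleType := by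
  have extend : e.permCongr f =
      f.extendDomain (e.trans (subtypeUnivEquiv fun _ => trivial).symm) := by
    ext b
    rw [extendDomain_apply_subtype _ _ trivial]
    rfl
  rw [extend, cycleType_extendDomain]

end Equiv.Perm

namespace Matrix

section Permutation

variable {m n R : Type*} [DecidableEq m] [DecidableEq n]

theorem mem_centralizer_permMatrix_iff [Fintype n] [Ring R] (σ : Perm n) (a : Matrix n n R) :
    a ∈ Subring.centralizer {σ.permMatrix R} ↔ ∀ i j, a i j = a (σ i) (σ j) := by
  simp only [Subring.mem_centralizer_iff, Set.mem_singleton_iff, forall_eq]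
  rw [PEquiv.toMatrix_toPEquiv_mul, PEquiv.mul_toMatrix_toPEquiv, ← Matrix.ext_iff]
  simp only [submatrix_apply, id]
  refine ⟨fun h i j => ?_, fun h i j => ?_⟩
  · simpa using (h i (σ j)).symm
  · simpa using (h i (σ.symm j)).symm

theorem reindex_permMatrix [Zero R] [One R] (e : m ≃ n) (σ : Perm m) :
    reindex e e (σ.permMatrix R) = (e.permCongr σ).permMatrix R := by
  ext i j
  simp [PEquiv.toMatrix_apply, ← Equiv.eq_symm_apply]

theorem permMatrix_sigmaCongrRight [Zero R] [One R] {ι : Type*} [DecidableEq ι]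
    {β : ι → Type*} [∀ i, DecidableEq (β i)] (f : ∀ i, Perm (β i)) :
    (Perm.sigmaCongrRight f).permMatrix R = blockDiagonal' fun i => (f i).permMatrix R := by
  ext ⟨i, x⟩ ⟨j, y⟩
  obtain rfl | hij := eq_or_ne i j
  · simp [PEquiv.toMatrix_apply, blockDiagonal'_apply_eq]
  · simp [PEquiv.toMatrix_apply, blockDiagonal'_apply_ne _ _ _ hij, hij]

end Permutation

section Diagonal

variable {n R : Type*} [DecidableEq n]

theorem mem_centralizer_diagonal_iff [Fintype n] [CommRing R] [NoZeroDivisors R] (d : n → R)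
    (X : Matrix n n R) :
    X ∈ Subring.centralizer {diagonal d} ↔ ∀ i j, d i ≠ d j → X i j = 0 := by
  simp only [Subring.mem_centralizer_iff, Set.mem_singleton_iff, forall_eq]
  rw [← Matrix.ext_iff]
  simp only [diagonal_mul, mul_diagonal, mul_comm (X _ _), ← sub_eq_zero (a := d _ * _),
    ← sub_mul, mul_eq_zero, sub_eq_zero, or_iff_not_imp_left]

variable {ι : Type*} [Fintype ι] [DecidableEq ι] {o : ι → Type*} [∀ a, Fintype (o a)]
  [∀ a, DecidableEq (o a)] [Field R]

theorem blockDiagonal'_mem_centralizer_diagonal (f : ι → R) (b : ∀ a, Matrix (o a) (o a) R) :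
    blockDiagonal' b ∈ Subring.centralizer {diagonal fun x : Σ a, o a => f x.1} := by
  rw [mem_centralizer_diagonal_iff]
  rintro ⟨a, k⟩ ⟨a', k'⟩ hne
  exact blockDiagonal'_apply_ne _ _ _ fun h => hne (congrArg f h)

noncomputable def centralizerDiagonalSigmaEquiv {f : ι → R} (hf : Injective f) :
    Subring.centralizer {diagonal fun x : Σ a, o a => f x.1} ≃+* ∀ a, Matrix (o a) (o a) R :=
  .symm <| .ofBijective
    ((blockDiagonal'RingHom o R).codRestrict _ (blockDiagonal'_mem_centralizer_diagonal f))
    ⟨fun b b' h => blockDiagonal'_injective (congrArg Subtype.val h), fun X => by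
      let blocks a := (X : Matrix (Σ a, o a) (Σ a, o a) R).submatrix (Sigma.mk a) (Sigma.mk a)
      refine ⟨blocks, Subtype.ext ?_⟩
      ext ⟨a, k⟩ ⟨a', k'⟩
      change blockDiagonal' blocks _ _ = _
      obtain rfl | hne := eq_or_ne a a'
      · rw [blockDiagonal'_apply_eq]
        rfl
      · rw [blockDiagonal'_apply_ne _ _ _ hne,
          (mem_centralizer_diagonal_iff _ _).1 X.2 _ _ (hf.ne hne)]⟩

end Diagonal

variable {m n R : Type*} [Fintype m] [Fintype n] [DecidableEq m] [DecidableEq n]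

def conjRingEquiv [Semiring R] (P : Matrix m n R) (Q : Matrix n m R) (hQP : Q * P = 1)
    (hPQ : P * Q = 1) : Matrix m m R ≃+* Matrix n n R where
  toFun X := Q * X * P
  invFun Y := P * Y * Q
  left_inv X := by
    simp only [Matrix.mul_assoc, hPQ, Matrix.mul_one, ← Matrix.mul_assoc P Q, Matrix.one_mul]
  right_inv Y := by
    simp only [Matrix.mul_assoc, hQP, Matrix.mul_one, ← Matrix.mul_assoc Q P, Matrix.one_mul]
  map_mul' X Y := by
    simp only [Matrix.mul_assoc, ← Matrix.mul_assoc P Q, hPQ, Matrix.one_mul]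
  map_add' X Y := by simp only [Matrix.mul_add, Matrix.add_mul]

noncomputable def piRingEquivByCard [Semiring R] {ι : Type*} [Finite ι] {o : ι → Type*}
    [∀ a, Fintype (o a)] [∀ a, DecidableEq (o a)] {s : ℕ}
    (hpos : ∀ a, 0 < Fintype.card (o a)) (hle : ∀ a, Fintype.card (o a) ≤ s) (h : Fin s → ℕ)
    (hh : ∀ i : Fin s, Nat.card {a // Fintype.card (o a) = i + 1} = h i) :
    (∀ a, Matrix (o a) (o a) R) ≃+*
      ∀ i : Fin s, Fin (h i) → Matrix (Fin (i + 1)) (Fin (i + 1)) R :=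
  let rank (a : ι) : Fin s := ⟨Fintype.card (o a) - 1, by have := hpos a; have := hle a; omega⟩
  have rank_eq {a i} : rank a = i ↔ Fintype.card (o a) = i + 1 := by
    simp only [rank, Fin.ext_iff]; have := hpos a; omega
  (RingEquiv.piCongrLeft' _ (Equiv.sigmaFiberEquiv rank).symm).trans <|
  (RingEquiv.piCurry fun i (a : {a // rank a = i}) => Matrix (o a) (o a) R).trans <|
  RingEquiv.piCongrRight fun i =>
    (RingEquiv.piCongrRight fun a =>
      reindexRingEquiv R (Fintype.equivFinOfCardEq (rank_eq.1 a.2))).trans <|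
    RingEquiv.piCongrLeft' _ <| (Finite.equivFin _).trans <|
      finCongr <| (Nat.card_congr (Equiv.subtypeEquivRight fun _ => rank_eq)).trans (hh i)

end Matrix

section Fourier

variable (R : Type*) [Field R] [DecidableEq R] (m : ℕ)

def fourierMatrix : Matrix (Fin m) (nthRootsFinset m (1 : R)) R :=
  of fun x ζ => (ζ : R) ^ (x : ℕ)

def invFourierMatrix : Matrix (nthRootsFinset m (1 : R)) (Fin m) R :=
  of fun ζ x => (m : R)⁻¹ * (ζ : R)⁻¹ ^ (x : ℕ)

variable {R m}

theorem invFourierMatrix_mul_fourierMatrix (hm : (m : R) ≠ 0) :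
    invFourierMatrix R m * fourierMatrix R m = 1 := by
  have hm0 : 0 < m := Nat.pos_of_ne_zero fun h => hm (by simp [h])
  have root (ζ : nthRootsFinset m (1 : R)) : (ζ : R) ^ m = 1 := (mem_nthRootsFinset hm0 1).1 ζ.2
  have ne_zero (ζ : nthRootsFinset m (1 : R)) : (ζ : R) ≠ 0 := by
    rintro h; simpa [h, zero_pow hm0.ne'] using root ζ
  ext ζ ζ'
  have entry : (invFourierMatrix R m * fourierMatrix R m) ζ ζ' =
      (m : R)⁻¹ * ∑ x ∈ Finset.range m, ((ζ : R)⁻¹ * ζ') ^ x := by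
    simp only [mul_apply, invFourierMatrix, fourierMatrix, of_apply, Finset.mul_sum, mul_pow,
      mul_assoc, Fin.sum_univ_eq_sum_range (fun x => (m : R)⁻¹ * ((ζ : R)⁻¹ ^ x * (ζ' : R) ^ x))]
  rw [entry]
  obtain rfl | hne := eq_or_ne ζ ζ'
  · simp [inv_mul_cancel₀ (ne_zero ζ), hm, one_apply_eq]
  · have ratio_ne_one : (ζ : R)⁻¹ * ζ' ≠ 1 := fun h =>
      hne (Subtype.ext (by rwa [inv_mul_eq_one₀ (ne_zero ζ)] at h))
    rw [geom_sum_eq ratio_ne_one, mul_pow, inv_pow, root, root, inv_one, one_mul, sub_self,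
      zero_div, mul_zero, one_apply_ne hne]

theorem fourierMatrix_mul_invFourierMatrix {ζ : R} (hζ : IsPrimitiveRoot ζ m)
    (hm : (m : R) ≠ 0) : fourierMatrix R m * invFourierMatrix R m = 1 :=
  (mul_eq_one_comm_of_card_eq _ _ _ (by simp [hζ.card_nthRootsFinset])).2
    (invFourierMatrix_mul_fourierMatrix hm)

theorem permMatrix_finRotate_mul_fourierMatrix :
    (finRotate m).permMatrix R * fourierMatrix R m =
      fourierMatrix R m * diagonal fun ζ : nthRootsFinset m (1 : R) => (ζ : R) := by
  ext x ζ
  rw [PEquiv.toMatrix_toPEquiv_mul, mul_diagonal]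
  obtain ⟨k, rfl⟩ := Nat.exists_eq_succ_of_ne_zero x.pos.ne'
  simp only [submatrix_apply, id, fourierMatrix, of_apply, coe_finRotate, ← pow_succ]
  split_ifs with h
  · rw [h, Fin.val_last, pow_zero, (mem_nthRootsFinset k.succ_pos 1).1 ζ.2]
  · rfl

end Fourier

section BlockRotation

variable {ι : Type*} (lam : ι → ℕ)

def blockRotation : Perm (Σ i, Fin (lam i)) :=
  Perm.sigmaCongrRight fun i => finRotate (lam i)

theorem cycleType_blockRotation [Fintype ι] [DecidableEq ι] :
    (blockRotation lam).cycleType = (Finset.univ.val.map lam).filter (2 ≤ ·) := by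
  rw [blockRotation, Perm.cycleType_sigmaCongrRight]
  simp only [Perm.cycleType_finRotate_eq_filter]
  rw [← Multiset.sum_map_filter_singleton, Multiset.map_map]
  rfl

variable (R : Type*) [Field R] [DecidableEq R] [Fintype ι] [DecidableEq ι]

def blockFourierMatrix : Matrix (Σ i, Fin (lam i)) (Σ i, nthRootsFinset (lam i) (1 : R)) R :=
  blockDiagonal' fun i => fourierMatrix R (lam i)

def invBlockFourierMatrix :
    Matrix (Σ i, nthRootsFinset (lam i) (1 : R)) (Σ i, Fin (lam i)) R :=
  blockDiagonal' fun i => invFourierMatrix R (lam i)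

variable {lam R}

theorem invBlockFourierMatrix_mul_blockFourierMatrix (hlam : ∀ i, (lam i : R) ≠ 0) :
    invBlockFourierMatrix lam R * blockFourierMatrix lam R = 1 := by
  simp only [invBlockFourierMatrix, blockFourierMatrix, ← blockDiagonal'_mul,
    invFourierMatrix_mul_fourierMatrix (hlam _)]
  exact blockDiagonal'_one

theorem blockFourierMatrix_mul_invBlockFourierMatrix (hlam : ∀ i, (lam i : R) ≠ 0)
    (hroot : ∀ i, ∃ ζ : R, IsPrimitiveRoot ζ (lam i)) :
    blockFourierMatrix lam R * invBlockFourierMatrix lam R = 1 := by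
  simp only [invBlockFourierMatrix, blockFourierMatrix, ← blockDiagonal'_mul,
    fun i => fourierMatrix_mul_invFourierMatrix (hroot i).choose_spec (hlam i)]
  exact blockDiagonal'_one

theorem invBlockFourierMatrix_mul_permMatrix_blockRotation_mul_blockFourierMatrix
    (hlam : ∀ i, (lam i : R) ≠ 0) :
    invBlockFourierMatrix lam R * (blockRotation lam).permMatrix R * blockFourierMatrix lam R =
      diagonal fun x : Σ i, nthRootsFinset (lam i) (1 : R) => (x.2 : R) := by
  rw [invBlockFourierMatrix, blockFourierMatrix, blockRotation, permMatrix_sigmaCongrRight,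
    ← blockDiagonal'_mul, ← blockDiagonal'_mul,
    ← blockDiagonal'_diagonal fun i (ζ : nthRootsFinset (lam i) (1 : R)) => (ζ : R)]
  congr 1
  ext1 i
  rw [Matrix.mul_assoc, permMatrix_finRotate_mul_fourierMatrix, ← Matrix.mul_assoc,
    invFourierMatrix_mul_fourierMatrix (hlam i), Matrix.one_mul]

noncomputable def centralizerBlockRotationEquiv (hlam : ∀ i, (lam i : R) ≠ 0)
    (hroot : ∀ i, ∃ ζ : R, IsPrimitiveRoot ζ (lam i)) :
    Subring.centralizer {(blockRotation lam).permMatrix R} ≃+*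
      ∀ ζ : Finset.univ.biUnion (fun i => nthRootsFinset (lam i) (1 : R)),
        Matrix {i // (ζ : R) ∈ nthRootsFinset (lam i) 1}
          {i // (ζ : R) ∈ nthRootsFinset (lam i) 1} R :=
  ((RingEquiv.centralizerCongr
      (conjRingEquiv _ _ (invBlockFourierMatrix_mul_blockFourierMatrix hlam)
        (blockFourierMatrix_mul_invBlockFourierMatrix hlam hroot))
      (invBlockFourierMatrix_mul_permMatrix_blockRotation_mul_blockFourierMatrix hlam)).trans
    (RingEquiv.centralizerCongr
      (reindexRingEquiv R (Finset.sigmaEquivSigmaBiUnion fun i => nthRootsFinset (lam i) 1))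
      (by rw [coe_reindexRingEquiv, reindex_apply, submatrix_diagonal_equiv]; rfl))).trans
  (centralizerDiagonalSigmaEquiv Subtype.val_injective)

end BlockRotation

namespace HasFullCycleType

variable {n s : ℕ} {σ : Perm (Fin n)} {lam : Fin s → ℕ}

theorem partition_parts (h : HasFullCycleType σ lam) :
    σ.partition.parts = ↑(List.ofFn lam) := by
  rwa [Perm.parts_partition, ← Perm.sum_cycleType, Fintype.card_fin]

theorem sum_eq (h : HasFullCycleType σ lam) : ∑ i, lam i = n := by
  have := σ.partition.parts_sum
  rwa [h.partition_parts, Multiset.sum_coe, List.sum_ofFn, Fintype.card_fin] at this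

theorem cycleType_eq (h : HasFullCycleType σ lam) :
    σ.cycleType = (Finset.univ.val.map lam).filter (2 ≤ ·) := by
  rw [← Perm.filter_parts_partition_eq_cycleType, h.partition_parts, Fin.univ_val_map]

theorem exists_permCongr_blockRotation (h : HasFullCycleType σ lam) :
    ∃ e : (Σ i, Fin (lam i)) ≃ Fin n, e.permCongr (blockRotation lam) = σ := by
  let g : (Σ i, Fin (lam i)) ≃ Fin n := Fintype.equivOfCardEq (by simp [h.sum_eq])
  have : IsConj (g.permCongr (blockRotation lam)) σ := by
    rw [Perm.isConj_iff_cycleType_eq, Perm.cycleType_permCongr, cycleType_blockRotation,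
      h.cycleType_eq]
  obtain ⟨τ, hτ⟩ := isConj_iff.1 this
  refine ⟨g.trans τ, hτ ▸ Equiv.ext fun x => ?_⟩
  simp [Perm.mul_apply]

end HasFullCycleType

theorem natCard_eq_hCount {R : Type*} [Field R] [DecidableEq R] {s : ℕ} {lam : Fin s → ℕ}
    (hlam : ∀ i, lam i ≠ 0) (k : ℕ) :
    Nat.card {ζ : Finset.univ.biUnion (fun i => nthRootsFinset (lam i) (1 : R)) //
      Fintype.card {i // (ζ : R) ∈ nthRootsFinset (lam i) 1} = k} = hCount R lam k := by
  have mem (x : R) (i) : x ∈ nthRootsFinset (lam i) (1 : R) ↔ x ^ lam i = 1 :=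
    mem_nthRootsFinset (Nat.pos_of_ne_zero (hlam i)) 1
  rw [hCount, ← Nat.card_coe_set_eq]
  refine Nat.card_congr <| (Equiv.subtypeSubtypeEquivSubtypeInter (· ∈ _)
    (fun x => Fintype.card {i // x ∈ nthRootsFinset (lam i) (1 : R)} = k)).trans <|
      Equiv.subtypeEquivRight fun x => ?_
  simp only [Finset.mem_biUnion, Finset.mem_univ, true_and, mem, Fintype.card_subtype,
    Set.mem_ofPred_eq, Set.ncard_eq_toFinset_card', Set.toFinset_ofPred]

theorem invariantSubring_eq_centralizer (R : Type*) [Ring R] {n : ℕ} (σ : Perm (Fin n)) :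
    invariantSubring R σ = Subring.centralizer {σ.permMatrix R} := by
  ext a
  rw [mem_centralizer_permMatrix_iff]
  rfl

theorem invariantSubring_wedderburn_general
    (R : Type*) [Field R] [IsAlgClosed R] (p : ℕ) [CharP R p]
    {n s : ℕ} (σ : Equiv.Perm (Fin n)) (lam : Fin s → ℕ)
    (hcyc : HasFullCycleType σ lam)
    (hp : ∀ i, ¬ p ∣ lam i) :
    Nonempty ((invariantSubring R σ) ≃+*
      ((i : Fin s) → Fin (hCount R lam ((i : ℕ) + 1)) →
        Matrix (Fin ((i : ℕ) + 1)) (Fin ((i : ℕ) + 1)) R)) := by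
  classical
  have hlam (i : Fin s) : (lam i : R) ≠ 0 := fun h => hp i ((CharP.cast_eq_zero_iff R p _).1 h)
  have hroot (i : Fin s) : ∃ ζ : R, IsPrimitiveRoot ζ (lam i) :=
    have : NeZero (lam i : R) := ⟨hlam i⟩
    HasEnoughRootsOfUnity.exists_primitiveRoot R (lam i)
  have card_pos (ζ : Finset.univ.biUnion fun i => nthRootsFinset (lam i) (1 : R)) :
      0 < Fintype.card {i // (ζ : R) ∈ nthRootsFinset (lam i) 1} := by
    obtain ⟨i, -, hi⟩ := Finset.mem_biUnion.1 ζ.2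
    exact Fintype.card_pos_iff.2 ⟨⟨i, hi⟩⟩
  obtain ⟨e, he⟩ := hcyc.exists_permCongr_blockRotation
  exact ⟨(RingEquiv.subringCongr (invariantSubring_eq_centralizer R σ)).trans <|
    (RingEquiv.centralizerCongr (reindexRingEquiv R e)
      (by rw [coe_reindexRingEquiv, reindex_permMatrix, he])).symm.trans <|
    (centralizerBlockRotationEquiv hlam hroot).trans <|
    piRingEquivByCard card_pos (fun _ => (Fintype.card_subtype_le _).trans_eq (Fintype.card_fin s))
      _ fun i => natCard_eq_hCount (fun j h => hlam j (by simp [h])) _⟩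

/-- Let `R` be an algebraically closed field of characteristic `p ≥ 0` and `σ ∈ Σ_n` of
cycle type `λ = (λ_1,…,λ_s)` with `p ∤ λ_i` for all `i`.  Then there is a ring isomorphism
`S_n(σ,R) ≅ R^{h_1(σ)} × M_2(R)^{h_2(σ)} × ⋯ × M_s(R)^{h_s(σ)}`. -/
theorem invariantSubring_wedderburn
    (R : Type*) [Field R] [IsAlgClosed R] (p : ℕ) [CharP R p]
    {n s : ℕ} (σ : Equiv.Perm (Fin n)) (lam : Fin s → ℕ)
    (hpos : ∀ i, 1 ≤ lam i) (hmono : ∀ i j : Fin s, i ≤ j → lam j ≤ lam i)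
    (hsum : ∑ i, lam i = n) (hcyc : HasFullCycleType σ lam)
    (hp : ∀ i, ¬ p ∣ lam i) :
    Nonempty ((invariantSubring R σ) ≃+*
      ((i : Fin s) → Fin (hCount R lam ((i : ℕ) + 1)) →
        Matrix (Fin ((i : ℕ) + 1)) (Fin ((i : ℕ) + 1)) R)) :=
  invariantSubring_wedderburn_general R p σ lam hcyc hp
end

section
/- Let R be a unitary ring and let σ = σ_1 σ_2 ⋯ σ_s ∈ Σ_n be a product of disjoint cycles, where σ_i is a cycle of length λ_i ≥ 1 with support X_i ⊆ [n] (the supports X_1,…,X_s partition [n]). Let f_i := Σ_{j ∈ X_i} e_{jj} ∈ S_n(σ,R). Then for each 1 ≤ i ≤ s, the corner ring f_i S_n(σ,R) f_i is isomorphic as a ring to the group ring R[C_{λ_i}] of the cyclic group of order λ_i over R. -/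
open Matrix

/-!
Write `X_i = {e 0, …, e (λ - 1)}` with `σ (e p) = e (p + 1)`, indexing by `ZMod λ`. The
matrices `P = (δ_{j, e q})` and `Q = Pᵀ` satisfy `Q P = 1` and `P Q = f_i`, so `A ↦ P A Q` embeds
`M_λ(R)` onto the corner `f_i M_n(R) f_i`, with inverse `B ↦ Q B P = (B_{e p, e q})`. Under this
identification, `σ`-invariance of a corner matrix `B` becomes invariance of `Q B P` under the shift
`(p, q) ↦ (p + 1, q + 1)`, i.e. `Q B P` is circulant, and circulant matrices over `ZMod λ` are
exactly the image of the regular representation of `R[C_λ]`.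
-/

namespace Matrix

section Corner

variable {ι α R : Type*} [Fintype ι] [Fintype α] [DecidableEq ι] [Semiring R]
  {P : Matrix α ι R} {Q : Matrix ι α R}

theorem mul_mul_cancel_of_mul_eq_one (hQP : Q * P = 1) {β : Type*} (X : Matrix ι β R) :
    Q * (P * X) = X := by
  rw [← Matrix.mul_assoc, hQP, Matrix.one_mul]

def cornerHom (hQP : Q * P = 1) : Matrix ι ι R →ₙ+* Matrix α α R where
  toFun A := P * A * Q
  map_zero' := by simp
  map_add' A B := by simp [Matrix.mul_add, Matrix.add_mul]
  map_mul' A B := by simp only [Matrix.mul_assoc, mul_mul_cancel_of_mul_eq_one hQP]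

theorem cornerHom_apply (hQP : Q * P = 1) (A : Matrix ι ι R) : cornerHom hQP A = P * A * Q :=
  rfl

theorem cornerHom_injective (hQP : Q * P = 1) : Function.Injective (cornerHom hQP) := by
  intro A B h
  simpa only [cornerHom_apply, Matrix.mul_assoc, mul_mul_cancel_of_mul_eq_one hQP, hQP,
    Matrix.mul_one] using congrArg (fun C => Q * C * P) h

theorem range_cornerHom_comp (hQP : Q * P = 1) {S : Type*} (g : S → Matrix ι ι R) :
    Set.range (cornerHom hQP ∘ g) =
      {B | P * Q * B * (P * Q) = B ∧ Q * B * P ∈ Set.range g} := by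
  ext B
  constructor
  · rintro ⟨x, rfl⟩
    simp only [Function.comp_apply, cornerHom_apply, Matrix.mul_assoc,
      mul_mul_cancel_of_mul_eq_one hQP, hQP, Matrix.mul_one, Set.mem_ofPred_eq, Set.mem_range]
    exact ⟨trivial, x, rfl⟩
  · rintro ⟨hB, x, hx⟩
    refine ⟨x, ?_⟩
    rw [Function.comp_apply, cornerHom_apply, hx]
    conv_rhs => rw [← hB]
    simp only [Matrix.mul_assoc]

end Corner

section Inclusion

variable {ι α R : Type*} [DecidableEq α] [Semiring R] {e : ι → α}

theorem one_submatrix_mul_one_submatrix [Fintype α] [DecidableEq ι] (he : Function.Injective e) :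
    (1 : Matrix α α R).submatrix e id * (1 : Matrix α α R).submatrix id e = 1 := by
  ext p q
  simp [mul_apply, one_apply, he.eq_iff]

theorem one_submatrix_mul_one_submatrix_eq_diagonal [Fintype ι] (he : Function.Injective e)
    {X : Finset α} (hX : Set.range e = X) :
    (1 : Matrix α α R).submatrix id e * (1 : Matrix α α R).submatrix e id =
      diagonal fun j => if j ∈ X then 1 else 0 := by
  ext j k
  by_cases hj : j ∈ X
  · obtain ⟨p, rfl⟩ : j ∈ Set.range e := hX ▸ hj
    rw [mul_apply, Finset.sum_eq_single p (fun q _ hq => by simp [one_apply, (he.ne hq).symm])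
      (by simp)]
    simp [one_apply, diagonal_apply, hj]
  · have hne : ∀ q, j ≠ e q := fun q h => hj (Finset.mem_coe.mp (hX ▸ ⟨q, h.symm⟩))
    simp [mul_apply, one_apply, diagonal_apply, hj, hne]

theorem one_submatrix_mul_mul_one_submatrix [Fintype α] (B : Matrix α α R) :
    (1 : Matrix α α R).submatrix e id * B * (1 : Matrix α α R).submatrix id e =
      B.submatrix e e := by
  ext p q
  simp [mul_apply, one_apply]

theorem apply_eq_zero_of_diagonal_mul_mul_diagonal_eq [Fintype α] {X : Finset α}
    {B : Matrix α α R}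
    (hB : diagonal (fun j => if j ∈ X then (1 : R) else 0) * B *
      diagonal (fun j => if j ∈ X then (1 : R) else 0) = B)
    {j k : α} (hjk : ¬(j ∈ X ∧ k ∈ X)) : B j k = 0 := by
  rw [← hB, mul_diagonal, diagonal_mul]
  rcases not_and_or.mp hjk with hj | hk <;> simp [*]

end Inclusion

section Circulant

variable {G : Type*} [AddGroup G]

theorem range_circulant {α : Type*} :
    Set.range (circulant : (G → α) → Matrix G G α) =
      {A | ∀ i j c, A (i + c) (j + c) = A i j} := by
  ext A
  constructor
  · rintro ⟨v, rfl⟩ i j c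
    simp [add_sub_add_right_eq_sub]
  · intro hA
    refine ⟨fun i => A i 0, ?_⟩
    ext i j
    simpa using (hA (i - j) 0 j).symm

theorem range_circulant_zmod {α : Type*} {m : ℕ} [NeZero m] :
    Set.range (circulant : (ZMod m → α) → Matrix (ZMod m) (ZMod m) α) =
      {A | ∀ i j, A (i + 1) (j + 1) = A i j} := by
  rw [range_circulant]
  ext A
  refine ⟨fun hA i j => hA i j 1, fun hA i j c => ?_⟩
  rw [← ZMod.natCast_zmod_val c]
  induction c.val with
  | zero => simp
  | succ k ih => rw [Nat.cast_succ, ← add_assoc, ← add_assoc, hA, ih]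

def circulantRingHom (R G : Type*) [Semiring R] [AddGroup G] [Fintype G] [DecidableEq G] :
    MonoidAlgebra R (Multiplicative G) →+* Matrix G G R where
  toFun f := circulant fun g => f.coeff (Multiplicative.ofAdd g)
  map_one' := by
    rw [← circulant_single_one]
    congr 1
    ext g
    simp [MonoidAlgebra.one_def, Finsupp.single_apply, Pi.single_apply,
      eq_comm (a := (1 : Multiplicative G))]
  map_mul' f f' := by
    ext i j
    simp only [circulant_apply, mul_apply, MonoidAlgebra.coeff_mul_apply_left]
    rw [Finsupp.sum_fintype _ _ fun _ => zero_mul _]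
    refine (Fintype.sum_equiv ((Equiv.subLeft i).trans Multiplicative.ofAdd) _ _
      fun k => ?_).symm
    simp
  map_zero' := by ext; simp
  map_add' f f' := by ext; simp

variable [Fintype G] [DecidableEq G] {R : Type*} [Semiring R]

theorem circulantRingHom_injective : Function.Injective (circulantRingHom R G) := by
  intro f f' h
  ext g
  exact congrFun (circulant_injective h) (Multiplicative.toAdd g)

theorem range_circulantRingHom :
    Set.range (circulantRingHom R G) = Set.range (circulant : (G → R) → Matrix G G R) := by
  ext A
  constructor
  · rintro ⟨f, rfl⟩
    exact ⟨_, rfl⟩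
  · rintro ⟨v, rfl⟩
    exact ⟨MonoidAlgebra.ofCoeff (Finsupp.equivFunOnFinite.symm (v ∘ Multiplicative.toAdd)), rfl⟩

end Circulant

end Matrix

namespace Equiv.Perm

variable {α : Type*} {f : Perm α}

theorem isCycleOn_of_mapsTo {s : Set α} (hs : s.Finite) (hmaps : Set.MapsTo f s s)
    (hcyc : ∀ x ∈ s, ∀ y ∈ s, ∃ k : ℕ, (f ^ k) x = y) : f.IsCycleOn s :=
  ⟨(hs.injOn_iff_bijOn_of_mapsTo hmaps).mp f.injective.injOn, fun x hx y hy =>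
    let ⟨k, hk⟩ := hcyc x hx y hy
    ⟨k, by rw [zpow_natCast, hk]⟩⟩

theorem IsCycleOn.exists_zmod_parametrization {s : Finset α} {m : ℕ} [NeZero m]
    (hf : f.IsCycleOn s) (hm : s.card = m) :
    ∃ e : ZMod m → α, Function.Injective e ∧ Set.range e = s ∧ ∀ p, f (e p) = e (p + 1) := by
  subst hm
  obtain ⟨a, ha⟩ : s.Nonempty := Finset.card_ne_zero.mp (NeZero.ne _)
  have hval (k : ℕ) : (f ^ (k : ZMod s.card).val) a = (f ^ k) a :=
    (hf.pow_apply_eq_pow_apply ha).mpr (by rw [ZMod.val_natCast]; exact Nat.mod_modEq _ _)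
  refine ⟨fun p => (f ^ p.val) a, fun p q h => ?_, ?_, fun p => ?_⟩
  · simpa using (ZMod.natCast_eq_natCast_iff _ _ _).mpr ((hf.pow_apply_eq_pow_apply ha).mp h)
  · rw [← hf.range_pow s.finite_toSet ha]
    ext b
    exact ⟨fun ⟨p, hp⟩ => ⟨p.val, hp⟩, fun ⟨k, hk⟩ => ⟨k, (hval k).trans hk⟩⟩
  · have hsucc := hval (p.val + 1)
    rw [Nat.cast_add, ZMod.natCast_zmod_val, Nat.cast_one] at hsucc
    simp only [hsucc, pow_succ', mul_apply]

end Equiv.Perm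

theorem mem_invariantSubring_iff_of_corner {R : Type*} [Ring R] {n : ℕ}
    {σ : Equiv.Perm (Fin n)} {X : Finset (Fin n)} {B : Matrix (Fin n) (Fin n) R} {ι : Type*}
    {e : ι → Fin n} {τ : Equiv.Perm ι} (he : ∀ p, σ (e p) = e (τ p)) (hX : Set.range e = X)
    (hB : diagonal (fun j => if j ∈ X then (1 : R) else 0) * B *
      diagonal (fun j => if j ∈ X then (1 : R) else 0) = B) :
    B ∈ invariantSubring R σ ↔ ∀ p q, B (e (τ p)) (e (τ q)) = B (e p) (e q) := by
  have hmem (j : Fin n) : σ j ∈ X ↔ j ∈ X := by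
    simp only [← Finset.mem_coe, ← hX]
    exact ⟨fun ⟨p, hp⟩ => ⟨τ.symm p, σ.injective (by rw [he, τ.apply_symm_apply, hp])⟩,
      fun ⟨p, hp⟩ => ⟨τ p, by rw [← he, hp]⟩⟩
  refine ⟨fun hinv p q => by rw [← he, ← he]; exact (hinv _ _).symm, fun h j k => ?_⟩
  by_cases hjk : j ∈ X ∧ k ∈ X
  · obtain ⟨⟨p, rfl⟩, ⟨q, rfl⟩⟩ : j ∈ Set.range e ∧ k ∈ Set.range e := by
      simpa only [hX, Finset.mem_coe] using hjk
    rw [he, he]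
    exact (h p q).symm
  · rw [apply_eq_zero_of_diagonal_mul_mul_diagonal_eq hB hjk,
      apply_eq_zero_of_diagonal_mul_mul_diagonal_eq hB (by rwa [hmem, hmem])]

theorem corner_ring_iso_groupRing_general (R : Type*) [Ring R] {n s : ℕ}
    (σ : Equiv.Perm (Fin n)) (lam : Fin s → ℕ) (X : Fin s → Finset (Fin n))
    (hcard : ∀ i, (X i).card = lam i) (hpos : ∀ i, 1 ≤ lam i)
    (hinv : ∀ i, ∀ x ∈ X i, σ x ∈ X i)
    (htrans : ∀ i, ∀ x ∈ X i, ∀ y ∈ X i, ∃ k : ℕ, (σ ^ k) x = y)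
    (i : Fin s) :
    ∃ φ : MonoidAlgebra R (Multiplicative (ZMod (lam i))) →ₙ+* Matrix (Fin n) (Fin n) R,
      Function.Injective φ ∧
      φ 1 = Matrix.diagonal (fun j => if j ∈ X i then (1 : R) else 0) ∧
      Set.range φ = {b : Matrix (Fin n) (Fin n) R | b ∈ invariantSubring R σ ∧
        Matrix.diagonal (fun j => if j ∈ X i then (1 : R) else 0) * b *
          Matrix.diagonal (fun j => if j ∈ X i then (1 : R) else 0) = b} := by
  have : NeZero (lam i) := ⟨Nat.one_le_iff_ne_zero.mp (hpos i)⟩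
  obtain ⟨e, he_inj, he_range, he_succ⟩ :=
    (Equiv.Perm.isCycleOn_of_mapsTo (X i).finite_toSet (fun x hx => hinv i x hx)
      (htrans i)).exists_zmod_parametrization (hcard i)
  have hQP := one_submatrix_mul_one_submatrix (R := R) he_inj
  have hPQ := one_submatrix_mul_one_submatrix_eq_diagonal (R := R) he_inj he_range
  refine ⟨(cornerHom hQP).comp (circulantRingHom R (ZMod (lam i)) : _ →ₙ+* _),
    (cornerHom_injective hQP).comp circulantRingHom_injective, ?_, ?_⟩
  · change cornerHom hQP (circulantRingHom R (ZMod (lam i)) 1) = _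
    rw [map_one, cornerHom_apply, Matrix.mul_one, hPQ]
  · change Set.range (cornerHom hQP ∘ circulantRingHom R (ZMod (lam i))) = _
    rw [range_cornerHom_comp, hPQ, range_circulantRingHom, range_circulant_zmod]
    ext B
    simp only [Set.mem_ofPred_eq, one_submatrix_mul_mul_one_submatrix, submatrix_apply]
    rw [and_comm]
    exact and_congr_left fun hB =>
      (mem_invariantSubring_iff_of_corner (τ := Equiv.addRight 1) he_succ he_range hB).symm

/-- Let `R` be a unitary ring and `σ = σ_1 ⋯ σ_s ∈ Σ_n` a product of disjoint cycles,
where `σ_i` is a cycle of length `λ_i ≥ 1` with support `X_i` (the supports partition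
`[n]`; equivalently each `X i` is `σ`-invariant and `σ` acts transitively on it).  With
`f_i = Σ_{j ∈ X_i} e_{jj}`, the corner ring `f_i S_n(σ,R) f_i` is isomorphic as a ring to
the group ring `R[C_{λ_i}]`: there is an injective non-unital ring homomorphism from
`R[C_{λ_i}]` to `M_n(R)` with image `f_i S_n(σ,R) f_i = {b ∈ S_n(σ,R) | f_i b f_i = b}`
sending `1` to `f_i`. -/
theorem corner_ring_iso_groupRing (R : Type*) [Ring R] {n s : ℕ}
    (σ : Equiv.Perm (Fin n)) (lam : Fin s → ℕ) (X : Fin s → Finset (Fin n))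
    (hdisj : ∀ i j, i ≠ j → Disjoint (X i) (X j))
    (hcover : Finset.univ.biUnion X = Finset.univ)
    (hcard : ∀ i, (X i).card = lam i) (hpos : ∀ i, 1 ≤ lam i)
    (hinv : ∀ i, ∀ x ∈ X i, σ x ∈ X i)
    (htrans : ∀ i, ∀ x ∈ X i, ∀ y ∈ X i, ∃ k : ℕ, (σ ^ k) x = y)
    (i : Fin s) :
    ∃ φ : MonoidAlgebra R (Multiplicative (ZMod (lam i))) →ₙ+* Matrix (Fin n) (Fin n) R,
      Function.Injective φ ∧
      φ 1 = Matrix.diagonal (fun j => if j ∈ X i then (1 : R) else 0) ∧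
      Set.range φ = {b : Matrix (Fin n) (Fin n) R | b ∈ invariantSubring R σ ∧
        Matrix.diagonal (fun j => if j ∈ X i then (1 : R) else 0) * b *
          Matrix.diagonal (fun j => if j ∈ X i then (1 : R) else 0) = b} :=
  corner_ring_iso_groupRing_general R σ lam X hcard hpos hinv htrans i
end

section
/- Let λ = (λ_1,…,λ_s) be a partition of n with s parts. Regard the triangular divisor matrix Λ_λ as the s×s strictly upper triangular matrix over the multivariate polynomial semiring ℕ[x_1,…,x_s] whose (i,j)-entry is the monomial x_i x_j for i < j and 0 otherwise. Define the additive evaluation map φ_λ : ℕ[x_1,…,x_s] → ℕ sending each monomial c·x_1^{e_1}⋯x_s^{e_s} (c ∈ ℕ) to c·gcd{λ_k : e_k > 0}, and for a matrix A over ℕ[x_1,…,x_s] set ‖A‖_λ := Σ over all entries of φ_λ applied to that entry. Then for every 1 ≤ i ≤ s−1, ‖Λ_λ^i‖_λ = g_{i+1}(λ). -/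
/-- `g_i(λ) = Σ_{1 ≤ k_1 < … < k_i ≤ s} gcd(λ_{k_1},…,λ_{k_i})`. -/
def gPart {s : ℕ} (lam : Fin s → ℕ) (i : ℕ) : ℕ :=
  ∑ T ∈ Finset.univ.powersetCard i, T.gcd lam

/-- The triangular divisor matrix `Λ_λ`, regarded as the strictly upper triangular
`s × s` matrix over `ℕ[x_1,…,x_s]` with `(i,j)`-entry the monomial `x_i x_j` for `i < j`. -/
noncomputable def divisorMatrix (s : ℕ) :
    Matrix (Fin s) (Fin s) (MvPolynomial (Fin s) ℕ) :=
  Matrix.of fun i j => if i < j then MvPolynomial.X i * MvPolynomial.X j else 0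

/-- The additive evaluation map `φ_λ : ℕ[x_1,…,x_s] → ℕ`, sending each monomial
`c·x_1^{e_1}⋯x_s^{e_s}` to `c · gcd{λ_k : e_k > 0}`. -/
def phiEval {s : ℕ} (lam : Fin s → ℕ) (p : MvPolynomial (Fin s) ℕ) : ℕ :=
  ∑ m ∈ p.support, p.coeff m * m.support.gcd lam

/-- The norm `‖A‖_λ` of a matrix over `ℕ[x_1,…,x_s]`: the sum of `φ_λ` over all entries. -/
def matNorm {s : ℕ} (lam : Fin s → ℕ) (A : Matrix (Fin s) (Fin s) (MvPolynomial (Fin s) ℕ)) : ℕ :=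
  ∑ a : Fin s, ∑ b : Fin s, phiEval lam (A a b)

open Finset MvPolynomial

variable {s : ℕ}

noncomputable def cExp (a b : Fin s) (T : Finset (Fin s)) : Fin s →₀ ℕ :=
  Finsupp.single a 1 + Finsupp.single b 1 + ∑ k ∈ T, Finsupp.single k 2

noncomputable def cMono (a b : Fin s) (T : Finset (Fin s)) : MvPolynomial (Fin s) ℕ :=
  monomial (cExp a b T) 1

lemma cExp_support {a b : Fin s} {T : Finset (Fin s)} (hab : a ≠ b)
    (ha : a ∉ T) (hb : b ∉ T) : (cExp a b T).support = insert a (insert b T) := by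
  ext x
  simp only [cExp, Finsupp.mem_support_iff, Finsupp.add_apply, Finsupp.finset_sum_apply,
    Finsupp.single_apply, Finset.sum_ite_eq, mem_insert]
  constructor
  · intro h
    by_contra hc
    push_neg at hc
    obtain ⟨hxa, hxb, hxT⟩ := hc
    simp [Ne.symm hxa, Ne.symm hxb, hxT] at h
  · intro h
    rcases h with h | h | h
    · subst h; simp
    · subst h; simp
    · simp [h]


lemma X_mul_X (c b : Fin s) : (X c : MvPolynomial (Fin s) ℕ) * X b
    = monomial (Finsupp.single c 1 + Finsupp.single b 1) 1 := by
  rw [X, X, monomial_mul, one_mul]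

lemma cMono_mul {a b c : Fin s} {T : Finset (Fin s)} (hc : c ∉ T) :
    cMono a c T * (X c * X b) = cMono a b (insert c T) := by
  rw [X_mul_X, cMono, cMono, monomial_mul, one_mul]
  congr 1
  rw [cExp, cExp, Finset.sum_insert hc]
  have h2 : (Finsupp.single c 2 : Fin s →₀ ℕ) = Finsupp.single c 1 + Finsupp.single c 1 := by
    rw [← Finsupp.single_add]
  rw [h2]; congr 1; abel

lemma phiEval_zero (lam : Fin s → ℕ) : phiEval lam 0 = 0 := by simp [phiEval]

lemma phiEval_add (lam : Fin s → ℕ) (p q : MvPolynomial (Fin s) ℕ) :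
    phiEval lam (p + q) = phiEval lam p + phiEval lam q := by
  unfold phiEval
  rw [Finset.sum_subset (fun m hm => (MvPolynomial.support_add hm : m ∈ p.support ∪ q.support))
    (by intro m _ hm; rw [MvPolynomial.notMem_support_iff] at hm; simp [hm])]
  simp only [MvPolynomial.coeff_add, add_mul]
  rw [Finset.sum_add_distrib]
  congr 1
  · exact (Finset.sum_subset Finset.subset_union_left
      (by intro m _ hm; rw [MvPolynomial.notMem_support_iff] at hm; simp [hm])).symm
  · exact (Finset.sum_subset Finset.subset_union_right
      (by intro m _ hm; rw [MvPolynomial.notMem_support_iff] at hm; simp [hm])).symm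

lemma phiEval_finset_sum {ι : Type*} (lam : Fin s → ℕ) (F : Finset ι)
    (f : ι → MvPolynomial (Fin s) ℕ) :
    phiEval lam (∑ t ∈ F, f t) = ∑ t ∈ F, phiEval lam (f t) := by
  classical
  induction F using Finset.cons_induction with
  | empty => simp [phiEval_zero]
  | cons a F ha ih => rw [Finset.sum_cons, phiEval_add, ih, Finset.sum_cons]

lemma phiEval_monomial (lam : Fin s → ℕ) (e : Fin s →₀ ℕ) :
    phiEval lam (monomial e 1) = e.support.gcd lam := by
  simp [phiEval, support_monomial, coeff_monomial]


lemma cMono_empty (a b : Fin s) : cMono a b ∅ = X a * X b := by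
  rw [X_mul_X, cMono, cExp]; simp

noncomputable def splitMax (a : Fin s) (S : Finset (Fin s)) : (_ : Fin s) × Finset (Fin s) :=
  if h : S.Nonempty then ⟨S.max' h, S.erase (S.max' h)⟩ else ⟨a, ∅⟩

lemma step_bij {a b : Fin s} (i : ℕ) (hi : 1 ≤ i) :
    ∑ p ∈ (Finset.Ioo a b).sigma (fun c => (Finset.Ioo a c).powersetCard (i-1)),
        cMono a b (insert p.1 p.2)
      = ∑ T ∈ (Finset.Ioo a b).powersetCard i, cMono a b T := by
  apply Finset.sum_nbij' (i := fun p => insert p.1 p.2) (j := splitMax a)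
  · rintro ⟨c, T⟩ hp
    rw [Finset.mem_sigma] at hp
    obtain ⟨hc, hT⟩ := hp
    rw [Finset.mem_powersetCard] at hT ⊢
    have hcT : c ∉ T := fun h => absurd (Finset.mem_Ioo.mp (hT.1 h)).2 (lt_irrefl c)
    constructor
    · intro x hx
      rcases Finset.mem_insert.mp hx with h | h
      · rwa [h]
      · exact Finset.Ioo_subset_Ioo le_rfl (le_of_lt (Finset.mem_Ioo.mp hc).2) (hT.1 h)
    · rw [Finset.card_insert_of_notMem hcT, hT.2]; omega
  · intro S hS
    obtain ⟨hSsub, hScard⟩ := Finset.mem_powersetCard.mp hS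
    have hne : S.Nonempty := Finset.card_pos.mp (by rw [hScard]; omega)
    rw [splitMax, dif_pos hne, Finset.mem_sigma]
    refine ⟨hSsub (S.max'_mem hne), ?_⟩
    rw [Finset.mem_powersetCard]
    constructor
    · intro x hx
      have hxS := Finset.mem_of_mem_erase hx
      have hxa := (Finset.mem_Ioo.mp (hSsub hxS)).1
      have hxm := lt_of_le_of_ne (S.le_max' x hxS) (Finset.ne_of_mem_erase hx)
      exact Finset.mem_Ioo.mpr ⟨hxa, hxm⟩
    · rw [Finset.card_erase_of_mem (S.max'_mem hne), hScard]
  · rintro ⟨c, T⟩ hp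
    rw [Finset.mem_sigma] at hp
    obtain ⟨hc, hT⟩ := hp
    rw [Finset.mem_powersetCard] at hT
    have hcT : c ∉ T := fun h => absurd (Finset.mem_Ioo.mp (hT.1 h)).2 (lt_irrefl c)
    have hne : (insert c T).Nonempty := ⟨c, Finset.mem_insert_self c T⟩
    have hmax : (insert c T).max' hne = c := by
      apply le_antisymm
      · apply Finset.max'_le
        intro y hy
        rcases Finset.mem_insert.mp hy with h | h
        · exact le_of_eq h
        · exact le_of_lt (Finset.mem_Ioo.mp (hT.1 h)).2
      · exact Finset.le_max' _ c (Finset.mem_insert_self c T)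
    rw [splitMax, dif_pos hne]
    simp only [hmax, Finset.erase_insert hcT]
  · intro S hS
    obtain ⟨hSsub, hScard⟩ := Finset.mem_powersetCard.mp hS
    have hne : S.Nonempty := Finset.card_pos.mp (by rw [hScard]; omega)
    rw [splitMax, dif_pos hne]
    exact Finset.insert_erase (S.max'_mem hne)
  · intro p hp
    rfl

lemma pow_entry (i : ℕ) (hi : 1 ≤ i) (a b : Fin s) :
    (divisorMatrix s ^ i) a b =
      if a < b then ∑ T ∈ (Finset.Ioo a b).powersetCard (i-1), cMono a b T else 0 := by
  induction i, hi using Nat.le_induction generalizing a b with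
  | base =>
      rw [pow_one]
      simp [divisorMatrix, cMono_empty]
  | succ i hi ih =>
      rw [pow_succ, Matrix.mul_apply]
      have hdiv : ∀ c : Fin s, divisorMatrix s c b = if c < b then X c * X b else 0 := by
        intro c; rfl
      simp only [ih, hdiv]
      by_cases hab : a < b
      · rw [if_pos hab]
        have step1 : (∑ c : Fin s,
              (if a < c then ∑ T ∈ (Finset.Ioo a c).powersetCard (i-1), cMono a c T else 0) *
                (if c < b then X c * X b else 0))
            = ∑ c ∈ Finset.Ioo a b,
                ∑ T ∈ (Finset.Ioo a c).powersetCard (i-1), cMono a b (insert c T) := by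
          rw [← Finset.sum_subset (Finset.subset_univ (Finset.Ioo a b)) ?_]
          · apply Finset.sum_congr rfl
            intro c hc
            rw [Finset.mem_Ioo] at hc
            rw [if_pos hc.1, if_pos hc.2, Finset.sum_mul]
            apply Finset.sum_congr rfl
            intro T hT
            rw [Finset.mem_powersetCard] at hT
            exact cMono_mul (fun h => absurd (Finset.mem_Ioo.mp (hT.1 h)).2 (lt_irrefl c))
          · intro c _ hc
            rw [Finset.mem_Ioo] at hc; push_neg at hc
            by_cases h1 : a < c
            · rw [if_neg (fun h2 => absurd (hc h1) (not_le.mpr h2)), mul_zero]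
            · rw [if_neg h1, zero_mul]
        rw [step1, Finset.sum_sigma', Nat.add_sub_cancel]
        exact step_bij i hi
      · rw [if_neg hab]
        apply Finset.sum_eq_zero
        intro c _
        by_cases h1 : a < c
        · by_cases h2 : c < b
          · exact absurd (h1.trans h2) hab
          · rw [if_neg h2, mul_zero]
        · rw [if_neg h1, zero_mul]



noncomputable def splitMinMax (a : Fin s) (S : Finset (Fin s)) :
    (_ : Fin s) × (_ : Fin s) × Finset (Fin s) :=
  if h : S.Nonempty then ⟨S.min' h, splitMax a (S.erase (S.min' h))⟩ else ⟨a, a, ∅⟩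

lemma final_bij (lam : Fin s → ℕ) (i : ℕ) (hi : 1 ≤ i) (hs : 0 < s) :
    ∑ p ∈ (Finset.univ : Finset (Fin s)).sigma
        (fun a => (Finset.Ioi a).sigma (fun b => (Finset.Ioo a b).powersetCard (i-1))),
        (insert p.1 (insert p.2.1 p.2.2)).gcd lam
      = ∑ S ∈ Finset.univ.powersetCard (i+1), S.gcd lam := by
  have a0 : Fin s := ⟨0, hs⟩
  apply Finset.sum_nbij' (i := fun p => insert p.1 (insert p.2.1 p.2.2))
    (j := splitMinMax a0)
  · rintro ⟨a, b, T⟩ hp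
    rw [Finset.mem_sigma, Finset.mem_sigma] at hp
    obtain ⟨-, hb, hT⟩ := hp
    rw [Finset.mem_Ioi] at hb
    rw [Finset.mem_powersetCard] at hT
    rw [Finset.mem_powersetCard]
    have hbT : b ∉ T := fun h => absurd (Finset.mem_Ioo.mp (hT.1 h)).2 (lt_irrefl b)
    have haI : a ∉ insert b T := by
      intro h
      rcases Finset.mem_insert.mp h with h | h
      · exact absurd h (ne_of_lt hb)
      · exact absurd (Finset.mem_Ioo.mp (hT.1 h)).1 (lt_irrefl a)
    refine ⟨fun x _ => Finset.mem_univ x, ?_⟩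
    rw [Finset.card_insert_of_notMem haI, Finset.card_insert_of_notMem hbT, hT.2]
    omega
  · intro S hS
    obtain ⟨-, hScard⟩ := Finset.mem_powersetCard.mp hS
    have hne : S.Nonempty := Finset.card_pos.mp (by rw [hScard]; omega)
    set m := S.min' hne with hm
    have hMcard : (S.erase m).card = i := by
      rw [Finset.card_erase_of_mem (S.min'_mem hne), hScard]; omega
    have hMne : (S.erase m).Nonempty := Finset.card_pos.mp (by rw [hMcard]; omega)
    rw [splitMinMax, dif_pos hne, ← hm, splitMax, dif_pos hMne]
    set M := (S.erase m).max' hMne with hM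
    rw [Finset.mem_sigma, Finset.mem_sigma]
    have hMS : M ∈ S.erase m := (S.erase m).max'_mem hMne
    have hmM : m < M :=
      lt_of_le_of_ne (S.min'_le M (Finset.mem_of_mem_erase hMS))
        (Ne.symm (Finset.ne_of_mem_erase hMS))
    refine ⟨Finset.mem_univ m, Finset.mem_Ioi.mpr hmM, ?_⟩
    rw [Finset.mem_powersetCard]
    constructor
    · intro x hx
      have hxM := Finset.mem_of_mem_erase hx
      have hxS := Finset.mem_of_mem_erase hxM
      refine Finset.mem_Ioo.mpr ⟨?_, ?_⟩
      · exact lt_of_le_of_ne (S.min'_le x hxS) (Ne.symm (Finset.ne_of_mem_erase hxM))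
      · exact lt_of_le_of_ne ((S.erase m).le_max' x hxM) (Finset.ne_of_mem_erase hx)
    · rw [Finset.card_erase_of_mem hMS, hMcard]
  · rintro ⟨a, b, T⟩ hp
    rw [Finset.mem_sigma, Finset.mem_sigma] at hp
    obtain ⟨-, hb, hT⟩ := hp
    rw [Finset.mem_Ioi] at hb
    rw [Finset.mem_powersetCard] at hT
    have hbT : b ∉ T := fun h => absurd (Finset.mem_Ioo.mp (hT.1 h)).2 (lt_irrefl b)
    have haI : a ∉ insert b T := by
      intro h
      rcases Finset.mem_insert.mp h with h | h
      · exact absurd h (ne_of_lt hb)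
      · exact absurd (Finset.mem_Ioo.mp (hT.1 h)).1 (lt_irrefl a)
    have hne : (insert a (insert b T)).Nonempty := ⟨a, Finset.mem_insert_self _ _⟩
    have hmin : (insert a (insert b T)).min' hne = a := by
      apply le_antisymm
      · exact Finset.min'_le _ a (Finset.mem_insert_self _ _)
      · apply Finset.le_min'
        intro y hy
        rcases Finset.mem_insert.mp hy with h | h
        · exact le_of_eq h.symm
        · rcases Finset.mem_insert.mp h with h | h
          · exact le_of_lt (h ▸ hb)
          · exact le_of_lt (Finset.mem_Ioo.mp (hT.1 h)).1
    rw [splitMinMax, dif_pos hne]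
    simp only [hmin, Finset.erase_insert haI]
    have hne2 : (insert b T).Nonempty := ⟨b, Finset.mem_insert_self _ _⟩
    have hmax : (insert b T).max' hne2 = b := by
      apply le_antisymm
      · apply Finset.max'_le
        intro y hy
        rcases Finset.mem_insert.mp hy with h | h
        · exact le_of_eq h
        · exact le_of_lt (Finset.mem_Ioo.mp (hT.1 h)).2
      · exact Finset.le_max' _ b (Finset.mem_insert_self _ _)
    rw [splitMax, dif_pos hne2]
    simp only [hmax, Finset.erase_insert hbT]
  · intro S hS
    obtain ⟨-, hScard⟩ := Finset.mem_powersetCard.mp hS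
    have hne : S.Nonempty := Finset.card_pos.mp (by rw [hScard]; omega)
    set m := S.min' hne with hm
    have hMcard : (S.erase m).card = i := by
      rw [Finset.card_erase_of_mem (S.min'_mem hne), hScard]; omega
    have hMne : (S.erase m).Nonempty := Finset.card_pos.mp (by rw [hMcard]; omega)
    rw [splitMinMax, dif_pos hne, ← hm, splitMax, dif_pos hMne]
    simp only
    rw [Finset.insert_erase ((S.erase m).max'_mem hMne), Finset.insert_erase (S.min'_mem hne)]
  · intro p hp
    rfl


/-- For a partition `λ = (λ_1,…,λ_s)` of `n` with `s` parts and every `1 ≤ i ≤ s-1`,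
`‖Λ_λ^i‖_λ = g_{i+1}(λ)`. -/
theorem matNorm_divisorMatrix_pow {n s : ℕ} (lam : Fin s → ℕ)
    (hpos : ∀ i, 1 ≤ lam i) (hmono : ∀ i j : Fin s, i ≤ j → lam j ≤ lam i)
    (hsum : ∑ i, lam i = n)
    (i : ℕ) (hi1 : 1 ≤ i) (his : i ≤ s - 1) :
    matNorm lam (divisorMatrix s ^ i) = gPart lam (i + 1) := by
  have hs : 0 < s := by omega
  unfold matNorm gPart
  have key : ∀ a b : Fin s, phiEval lam ((divisorMatrix s ^ i) a b)
      = if a < b then ∑ T ∈ (Finset.Ioo a b).powersetCard (i-1),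
          (insert a (insert b T)).gcd lam else 0 := by
    intro a b
    rw [pow_entry i hi1]
    split_ifs with h
    · rw [phiEval_finset_sum]
      apply Finset.sum_congr rfl
      intro T hT
      rw [Finset.mem_powersetCard] at hT
      have haT : a ∉ T := fun hh => absurd (Finset.mem_Ioo.mp (hT.1 hh)).1 (lt_irrefl a)
      have hbT : b ∉ T := fun hh => absurd (Finset.mem_Ioo.mp (hT.1 hh)).2 (lt_irrefl b)
      rw [cMono, phiEval_monomial, cExp_support (ne_of_lt h) haT hbT]
    · exact phiEval_zero lam
  simp only [key]
  have step : ∀ a : Fin s, (∑ b : Fin s, if a < b then ∑ T ∈ (Finset.Ioo a b).powersetCard (i-1),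
          (insert a (insert b T)).gcd lam else 0)
      = ∑ b ∈ Finset.Ioi a, ∑ T ∈ (Finset.Ioo a b).powersetCard (i-1),
          (insert a (insert b T)).gcd lam := by
    intro a
    rw [← Finset.sum_subset (Finset.subset_univ (Finset.Ioi a)) ?_]
    · apply Finset.sum_congr rfl
      intro b hb
      rw [if_pos (Finset.mem_Ioi.mp hb)]
    · intro b _ hb
      rw [Finset.mem_Ioi] at hb
      rw [if_neg hb]
  simp only [step]
  rw [← final_bij lam i hi1 hs, Finset.sum_sigma]
  apply Finset.sum_congr rfl
  intro a _
  rw [Finset.sum_sigma]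
end

section
/- Let λ = (λ_1,…,λ_s) and μ = (μ_1,…,μ_s) be partitions of n with exactly s parts each. If the multisets {gcd(λ_i,λ_j) | 1 ≤ i < j ≤ s} and {gcd(μ_i,μ_j) | 1 ≤ i < j ≤ s} are equal, then λ ∼ μ, i.e. g_i(λ) = g_i(μ) for all 1 ≤ i ≤ s. -/
open Finset

lemma choose_eq_of_choose_two_eq {a b i : ℕ} (h : Nat.choose a 2 = Nat.choose b 2)
    (hi : 2 ≤ i) : Nat.choose a i = Nat.choose b i := by
  have key : ∀ x y : ℕ, x < y → Nat.choose x 2 = Nat.choose y 2 → y ≤ 1 := by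
    intro x y hxy heq
    by_contra hy
    push_neg at hy
    obtain ⟨m, rfl⟩ : ∃ m, y = m + 1 := ⟨y - 1, by omega⟩
    have h1 : Nat.choose (m + 1) 2 = Nat.choose m 1 + Nat.choose m 2 :=
      Nat.choose_succ_succ m 1
    have h2 : Nat.choose x 2 ≤ Nat.choose m 2 := Nat.choose_le_choose 2 (by omega)
    have h3 : Nat.choose m 1 = m := Nat.choose_one_right m
    omega
  rcases lt_trichotomy a b with hab | rfl | hab
  · have hb := key a b hab h
    have ha : a ≤ 1 := by omega
    rw [Nat.choose_eq_zero_of_lt (by omega), Nat.choose_eq_zero_of_lt (by omega)]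
  · rfl
  · have ha := key b a hab h.symm
    have hb : b ≤ 1 := by omega
    rw [Nat.choose_eq_zero_of_lt (by omega), Nat.choose_eq_zero_of_lt (by omega)]

lemma filter_pair_card {s : ℕ} (D : Finset (Fin s)) :
    (Finset.univ.filter fun p : Fin s × Fin s =>
      p.1 < p.2 ∧ p.1 ∈ D ∧ p.2 ∈ D).card = Nat.choose D.card 2 := by
  rw [← Finset.card_powersetCard 2 D]
  apply Finset.card_bij (fun p _ => ({p.1, p.2} : Finset (Fin s)))
  · rintro ⟨a, b⟩ hp
    simp only [mem_filter, mem_univ, true_and] at hp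
    obtain ⟨hlt, ha, hb⟩ := hp
    rw [mem_powersetCard]
    constructor
    · intro x hx
      simp only [mem_insert, mem_singleton] at hx
      rcases hx with rfl | rfl <;> assumption
    · rw [card_insert_of_notMem (by simp [hlt.ne]), card_singleton]
  · rintro ⟨a, b⟩ ha ⟨c, d⟩ hc h
    simp only [mem_filter, mem_univ, true_and] at ha hc
    have h' : ({a, b} : Set (Fin s)) = {c, d} := by
      have := congrArg (fun (t : Finset (Fin s)) => (t : Set (Fin s))) h
      simpa using this
    rw [Set.pair_eq_pair_iff] at h'
    rcases h' with ⟨rfl, rfl⟩ | ⟨rfl, rfl⟩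
    · rfl
    · exact absurd (ha.1.trans hc.1) (lt_irrefl _)
  · intro T hT
    rw [mem_powersetCard] at hT
    obtain ⟨hsub, hcard⟩ := hT
    obtain ⟨a, b, hab, rfl⟩ := Finset.card_eq_two.mp hcard
    rcases lt_or_gt_of_ne hab with h | h
    · refine ⟨(a, b), ?_, rfl⟩
      simp only [mem_filter, mem_univ, true_and]
      exact ⟨h, hsub (by simp), hsub (by simp)⟩
    · refine ⟨(b, a), ?_, by rw [Finset.pair_comm]⟩
      simp only [mem_filter, mem_univ, true_and]
      exact ⟨h, hsub (by simp), hsub (by simp)⟩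

lemma gPart_one_eq {n s : ℕ} (lam : Fin s → ℕ) (hsum : ∑ i, lam i = n) :
    gPart lam 1 = n := by
  unfold gPart
  rw [Finset.powersetCard_one, Finset.sum_map]
  simpa using hsum

lemma gPart_eq_sum {n s : ℕ} (lam : Fin s → ℕ) (hpos : ∀ i, 1 ≤ lam i)
    (hsum : ∑ i, lam i = n) (i : ℕ) (hi : 1 ≤ i) :
    gPart lam i = ∑ d ∈ Finset.Icc 1 n,
      Nat.totient d * Nat.choose (Finset.univ.filter fun k => d ∣ lam k).card i := by
  unfold gPart
  have key : ∀ T ∈ (Finset.univ : Finset (Fin s)).powersetCard i,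
      T.gcd lam = ∑ d ∈ Finset.Icc 1 n, if d ∣ T.gcd lam then Nat.totient d else 0 := by
    intro T hT
    rw [Finset.mem_powersetCard] at hT
    have hTne : T.Nonempty := by
      rw [← Finset.card_pos, hT.2]; omega
    obtain ⟨k, hk⟩ := hTne
    have hgd : T.gcd lam ∣ lam k := Finset.gcd_dvd hk
    have hg1 : 1 ≤ T.gcd lam := by
      rcases Nat.eq_zero_or_pos (T.gcd lam) with h | h
      · rw [h] at hgd
        have := Nat.eq_zero_of_zero_dvd hgd
        have := hpos k
        omega
      · exact h
    have hgn : T.gcd lam ≤ n := by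
      calc T.gcd lam ≤ lam k := Nat.le_of_dvd (hpos k) hgd
        _ ≤ ∑ j, lam j := Finset.single_le_sum (fun j _ => Nat.zero_le _) (mem_univ k)
        _ = n := hsum
    have hset : (T.gcd lam).divisors = (Finset.Icc 1 n).filter (fun d => d ∣ T.gcd lam) := by
      ext d
      simp only [Nat.mem_divisors, Finset.mem_filter, Finset.mem_Icc]
      constructor
      · rintro ⟨hd, _⟩
        have hd1 : 1 ≤ d := by
          rcases Nat.eq_zero_or_pos d with rfl | h
          · have := Nat.eq_zero_of_zero_dvd hd; omega
          · exact h
        exact ⟨⟨hd1, (Nat.le_of_dvd (by omega) hd).trans hgn⟩, hd⟩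
      · rintro ⟨_, hd⟩
        exact ⟨hd, by omega⟩
    rw [← Finset.sum_filter, ← hset, Nat.sum_totient]
  rw [Finset.sum_congr rfl key, Finset.sum_comm]
  apply Finset.sum_congr rfl
  intro d _
  rw [← Finset.sum_filter, Finset.sum_const, smul_eq_mul, mul_comm]
  congr 1
  have hfe : (Finset.univ.powersetCard i).filter (fun T => d ∣ T.gcd lam)
      = (Finset.univ.filter fun k => d ∣ lam k).powersetCard i := by
    ext T
    simp only [Finset.mem_filter, Finset.mem_powersetCard, Finset.subset_univ, true_and,
      Finset.dvd_gcd_iff, Finset.subset_iff, Finset.mem_univ]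
    tauto
  rw [hfe, Finset.card_powersetCard]

/-- Let `λ, μ` be partitions of `n` with exactly `s` parts.  If the multisets
`{gcd(λ_i,λ_j) | i < j}` and `{gcd(μ_i,μ_j) | i < j}` are equal, then `λ ∼ μ`, i.e.
`g_i(λ) = g_i(μ)` for all `1 ≤ i ≤ s`. -/
theorem polyEquiv_of_gcd_multiset_eq {n s : ℕ} (lam mu : Fin s → ℕ)
    (hlpos : ∀ i, 1 ≤ lam i) (hlmono : ∀ i j : Fin s, i ≤ j → lam j ≤ lam i)
    (hlsum : ∑ i, lam i = n)
    (hmpos : ∀ i, 1 ≤ mu i) (hmmono : ∀ i j : Fin s, i ≤ j → mu j ≤ mu i)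
    (hmsum : ∑ i, mu i = n)
    (hmul : (Finset.univ.filter fun p : Fin s × Fin s => p.1 < p.2).val.map
        (fun p => Nat.gcd (lam p.1) (lam p.2)) =
      (Finset.univ.filter fun p : Fin s × Fin s => p.1 < p.2).val.map
        (fun p => Nat.gcd (mu p.1) (mu p.2))) :
    ∀ i, 1 ≤ i → i ≤ s → gPart lam i = gPart mu i := by
  intro i hi _
  rcases eq_or_lt_of_le hi with h1 | h2
  · rw [← h1, gPart_one_eq lam hlsum, gPart_one_eq mu hmsum]
  · rw [gPart_eq_sum lam hlpos hlsum i hi, gPart_eq_sum mu hmpos hmsum i hi]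
    apply Finset.sum_congr rfl
    intro d _
    congr 1
    apply choose_eq_of_choose_two_eq _ h2
    have hcount := congrArg (Multiset.countP (fun g => d ∣ g)) hmul
    rw [Multiset.countP_map, Multiset.countP_map] at hcount
    have hrw : ∀ f : Fin s → ℕ,
        Multiset.card (Multiset.filter (fun p : Fin s × Fin s => d ∣ Nat.gcd (f p.1) (f p.2))
          (Finset.univ.filter fun p : Fin s × Fin s => p.1 < p.2).val)
        = Nat.choose (Finset.univ.filter fun k => d ∣ f k).card 2 := by
      intro f
      rw [← Finset.filter_val, ← Finset.card_def, Finset.filter_filter]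
      rw [← filter_pair_card (Finset.univ.filter fun k => d ∣ f k)]
      congr 1
      ext p
      simp only [Finset.mem_filter, Finset.mem_univ, true_and, Nat.dvd_gcd_iff]
    rw [hrw lam, hrw mu] at hcount
    exact hcount
end

section
/- Let λ = (λ_1,…,λ_s) and μ = (μ_1,…,μ_s) be partitions of n with exactly s parts each, and suppose there is a positive integer d such that gcd(λ_i,λ_j) = d for all 1 ≤ i ≠ j ≤ s and gcd(μ_p,μ_q) = d for all 1 ≤ p ≠ q ≤ s. Then λ ∼ μ. In particular, if λ_1,…,λ_s are pairwise coprime and μ_1,…,μ_s are pairwise coprime, then λ ∼ μ. -/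
lemma gPart_one {s : ℕ} (lam : Fin s → ℕ) : gPart lam 1 = ∑ i, lam i := by
  unfold gPart
  rw [Finset.powersetCard_one, Finset.sum_map]
  simp

lemma gcd_eq_of_const {s : ℕ} (lam : Fin s → ℕ) (d : ℕ)
    (hld : ∀ i j : Fin s, i ≠ j → Nat.gcd (lam i) (lam j) = d)
    (T : Finset (Fin s)) (hT : 1 < T.card) : T.gcd lam = d := by
  obtain ⟨a, ha, b, hb, hab⟩ := Finset.one_lt_card.mp hT
  apply Nat.dvd_antisymm
  · have h1 := Finset.gcd_dvd (f := lam) ha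
    have h2 := Finset.gcd_dvd (f := lam) hb
    have := Nat.dvd_gcd h1 h2
    rwa [hld a b hab] at this
  · apply Finset.dvd_gcd
    intro k hk
    by_cases h : k = a
    · subst h
      rw [← hld k b hab]
      exact Nat.gcd_dvd_left _ _
    · rw [← hld k a h]
      exact Nat.gcd_dvd_left _ _

/-- Let `λ, μ` be partitions of `n` with exactly `s` parts such that, for some `d ≥ 1`,
`gcd(λ_i,λ_j) = d` for all `i ≠ j` and `gcd(μ_p,μ_q) = d` for all `p ≠ q`.  Then `λ ∼ μ`,
i.e. `g_i(λ) = g_i(μ)` for all `1 ≤ i ≤ s`.  (The case `d = 1` is the statement for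
pairwise coprime parts.) -/
theorem polyEquiv_of_constant_gcd {n s : ℕ} (lam mu : Fin s → ℕ)
    (hlpos : ∀ i, 1 ≤ lam i) (hlmono : ∀ i j : Fin s, i ≤ j → lam j ≤ lam i)
    (hlsum : ∑ i, lam i = n)
    (hmpos : ∀ i, 1 ≤ mu i) (hmmono : ∀ i j : Fin s, i ≤ j → mu j ≤ mu i)
    (hmsum : ∑ i, mu i = n)
    (d : ℕ) (hd : 1 ≤ d)
    (hld : ∀ i j : Fin s, i ≠ j → Nat.gcd (lam i) (lam j) = d)
    (hmd : ∀ p q : Fin s, p ≠ q → Nat.gcd (mu p) (mu q) = d) :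
    ∀ i, 1 ≤ i → i ≤ s → gPart lam i = gPart mu i := by
  intro i hi his
  rcases eq_or_lt_of_le hi with h1 | h1
  · rw [← h1, gPart_one, gPart_one, hlsum, hmsum]
  · unfold gPart
    apply Finset.sum_congr rfl
    intro T hT
    have hcard : T.card = i := (Finset.mem_powersetCard.mp hT).2
    rw [gcd_eq_of_const lam d hld T (by omega),
      gcd_eq_of_const mu d hmd T (by omega)]
end

section
/- Let λ = (λ_1,…,λ_s) and μ = (μ_1,…,μ_s) be partitions of n with exactly s parts each, and let m ≥ 1 be an integer such that the multisets {gcd(λ_j, m) | 1 ≤ j ≤ s} and {gcd(μ_j, m) | 1 ≤ j ≤ s} are equal. Then λ ∼ μ in P(s,n) if and only if (λ,m) ∼ (μ,m) in P(s+1, n+m), where (λ,m) denotes the partition of n+m whose multiset of parts is that of λ together with one additional part m. -/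
open Finset

/-- Such sums depend only on the multiset of values. -/
lemma gPart_congr_multiset {s : ℕ} (a b : Fin s → ℕ)
    (h : Finset.univ.val.map a = Finset.univ.val.map b) (j : ℕ) :
    ∑ T ∈ Finset.univ.powersetCard j, T.gcd a = ∑ T ∈ Finset.univ.powersetCard j, T.gcd b := by
  have key : ∀ c : Fin s → ℕ,
      ∑ T ∈ Finset.univ.powersetCard j, T.gcd c
        = (((Finset.univ.val.map c).powersetCard j).map Multiset.gcd).sum := by
    intro c
    rw [Finset.sum, Multiset.powersetCard_map, ← Finset.map_val_val_powersetCard,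
      Multiset.map_map, Multiset.map_map]
    congr 1
  rw [key a, key b, h]

lemma gcd_gcd_distrib {s : ℕ} (T : Finset (Fin s)) (hT : T.Nonempty) (f : Fin s → ℕ) (m : ℕ) :
    Nat.gcd (T.gcd f) m = T.gcd fun j => Nat.gcd (f j) m := by
  apply Nat.dvd_antisymm
  · apply Finset.dvd_gcd
    intro j hj
    exact Nat.dvd_gcd ((Nat.gcd_dvd_left _ _).trans (Finset.gcd_dvd hj)) (Nat.gcd_dvd_right _ _)
  · obtain ⟨j0, hj0⟩ := hT
    refine Nat.dvd_gcd (Finset.dvd_gcd fun j hj => ?_)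
      ((Finset.gcd_dvd hj0).trans (Nat.gcd_dvd_right _ _))
    exact (Finset.gcd_dvd hj).trans (Nat.gcd_dvd_left _ _)

lemma gcd_snoc_map {s : ℕ} (f : Fin s → ℕ) (m : ℕ) (T : Finset (Fin s)) :
    (T.map Fin.castSuccEmb).gcd (Fin.snoc f m : Fin (s+1) → ℕ) = T.gcd f := by
  simp only [Finset.gcd_def, Finset.map_val, Multiset.map_map]
  congr 1
  apply Multiset.map_congr rfl
  intro x _
  exact Fin.snoc_castSucc (α := fun _ => ℕ) m f x

lemma gPart_snoc {s : ℕ} (f : Fin s → ℕ) (m : ℕ) (j : ℕ) :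
    gPart (Fin.snoc f m : Fin (s+1) → ℕ) (j+1)
      = gPart f (j+1) + ∑ T ∈ Finset.univ.powersetCard j, Nat.gcd m (T.gcd f) := by
  classical
  have hlast : Fin.last s ∉ (Finset.univ : Finset (Fin s)).map Fin.castSuccEmb := by
    simp [Fin.ext_iff, Fin.castSucc, Fin.castAdd, Fin.castLE]
    intro x
    exact x.isLt.ne
  unfold gPart
  rw [Fin.univ_castSuccEmb, Finset.cons_eq_insert, powersetCard_succ_insert hlast]
  rw [Finset.sum_union]
  · congr 1
    · rw [Finset.powersetCard_map, Finset.sum_map]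
      refine Finset.sum_congr rfl fun T _ => ?_
      show (T.map Fin.castSuccEmb).gcd (Fin.snoc f m : Fin (s+1) → ℕ) = T.gcd f
      exact gcd_snoc_map f m T
    · rw [Finset.sum_image, Finset.powersetCard_map, Finset.sum_map]
      · refine Finset.sum_congr rfl fun T _ => ?_
        show (insert (Fin.last s) (T.map Fin.castSuccEmb)).gcd (Fin.snoc f m : Fin (s+1) → ℕ)
          = Nat.gcd m (T.gcd f)
        rw [Finset.gcd_insert, gcd_snoc_map, Fin.snoc_last]
        rfl
      · intro T1 h1 T2 h2 he
        have n1 : Fin.last s ∉ T1 := fun h =>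
          hlast ((Finset.mem_powersetCard.1 h1).1 h)
        have n2 : Fin.last s ∉ T2 := fun h =>
          hlast ((Finset.mem_powersetCard.1 h2).1 h)
        rw [← Finset.erase_insert n1, ← Finset.erase_insert n2, he]
  · rw [Finset.disjoint_left]
    intro T hT hT'
    obtain ⟨U, _, rfl⟩ := Finset.mem_image.1 hT'
    exact hlast ((Finset.mem_powersetCard.1 hT).1 (Finset.mem_insert_self _ _))

lemma sum_gcd_m_eq {s m : ℕ} (lam mu : Fin s → ℕ)
    (hmul : (Finset.univ.val.map fun j : Fin s => Nat.gcd (lam j) m) =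
            (Finset.univ.val.map fun j : Fin s => Nat.gcd (mu j) m)) (j : ℕ) :
    ∑ T ∈ Finset.univ.powersetCard j, Nat.gcd m (T.gcd lam)
      = ∑ T ∈ Finset.univ.powersetCard j, Nat.gcd m (T.gcd mu) := by
  cases j with
  | zero => simp
  | succ j =>
    have step : ∀ f : Fin s → ℕ,
        ∑ T ∈ Finset.univ.powersetCard (j+1), Nat.gcd m (T.gcd f)
          = ∑ T ∈ Finset.univ.powersetCard (j+1), T.gcd fun k => Nat.gcd (f k) m := by
      intro f
      refine Finset.sum_congr rfl fun T hT => ?_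
      have hTne : T.Nonempty := by
        rw [← Finset.card_pos, (Finset.mem_powersetCard.1 hT).2]
        omega
      rw [Nat.gcd_comm, gcd_gcd_distrib T hTne]
    rw [step lam, step mu]
    exact gPart_congr_multiset _ _ hmul (j+1)

lemma gPart_eq_zero_of_lt {s : ℕ} (f : Fin s → ℕ) {i : ℕ} (h : s < i) : gPart f i = 0 := by
  unfold gPart
  rw [Finset.powersetCard_eq_empty.2 (by simpa using h)]
  rfl

/-- Let `λ, μ` be partitions of `n` with exactly `s` parts and `m ≥ 1` an integer such
that the multisets `{gcd(λ_j,m) | 1 ≤ j ≤ s}` and `{gcd(μ_j,m) | 1 ≤ j ≤ s}` are equal.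
Then `λ ∼ μ` in `P(s,n)` if and only if `(λ,m) ∼ (μ,m)` in `P(s+1, n+m)`, where `(λ,m)`
is the partition whose multiset of parts is that of `λ` together with one part `m`. -/
theorem polyEquiv_append_part_iff {n s m : ℕ} (hm : 1 ≤ m) (lam mu : Fin s → ℕ)
    (hlpos : ∀ i, 1 ≤ lam i) (hlmono : ∀ i j : Fin s, i ≤ j → lam j ≤ lam i)
    (hlsum : ∑ i, lam i = n)
    (hmpos : ∀ i, 1 ≤ mu i) (hmmono : ∀ i j : Fin s, i ≤ j → mu j ≤ mu i)
    (hmsum : ∑ i, mu i = n)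
    (hmul : (Finset.univ.val.map fun j : Fin s => Nat.gcd (lam j) m) =
            (Finset.univ.val.map fun j : Fin s => Nat.gcd (mu j) m)) :
    (∀ i, 1 ≤ i → i ≤ s → gPart lam i = gPart mu i) ↔
    (∀ i, 1 ≤ i → i ≤ s + 1 →
      gPart (Fin.snoc lam m : Fin (s + 1) → ℕ) i = gPart (Fin.snoc mu m : Fin (s + 1) → ℕ) i) := by
  constructor
  · intro h i h1 hle
    cases i with
    | zero => omega
    | succ j =>
      rw [gPart_snoc, gPart_snoc, sum_gcd_m_eq lam mu hmul j]
      congr 1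
      by_cases hj : j + 1 ≤ s
      · exact h (j+1) (by omega) hj
      · rw [gPart_eq_zero_of_lt lam (by omega), gPart_eq_zero_of_lt mu (by omega)]
  · intro h i h1 hle
    have hi := h i h1 (by omega)
    cases i with
    | zero => omega
    | succ j =>
      rw [gPart_snoc, gPart_snoc, sum_gcd_m_eq lam mu hmul j] at hi
      exact Nat.add_right_cancel hi
end
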